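/- Let π = (p_1,...,p_n) be a sequence of distinct keys avoiding the pattern (2,3,1) (i.e., there are no indices i < j < k with p_k < p_i < p_j). Then the total cost of insertion splaying π, starting from the empty tree, is at most 6n. -/

import Mathlib

/-- Binary trees with keys at internal nodes. -/
inductive BT (α : Type) where
  | leaf : BT α
  | node : BT α → α → BT α → BT α
deriving DecidableEq

namespace BT

variable {α : Type} [LinearOrder α]

/-- The list of keys of a tree, in symmetric (inorder) order. -/
def keys : BT α → List α
  | leaf => []
  | node l v r => keys l ++ v :: keys r

/-- The number of nodes of a tree. -/
def size : BT α → ℕ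
  | leaf => 0
  | node l _ r => size l + size r + 1

/-- The symmetric-order (binary search tree) property. -/
def IsBST : BT α → Prop
  | leaf => True
  | node l v r => (∀ x ∈ l.keys, x < v) ∧ (∀ x ∈ r.keys, v < x) ∧ l.IsBST ∧ r.IsBST

/-- Preorder of a binary tree: root, then left subtree, then right subtree. -/
def preorder : BT α → List α
  | leaf => []
  | node l v r => v :: (preorder l ++ preorder r)

/-- Postorder of a binary tree: left subtree, right subtree, then root. -/
def postorder : BT α → List α
  | leaf => []
  | node l v r => postorder l ++ postorder r ++ [v]

/-- Reversed preorder: root, then right subtree, then left subtree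
(the preorder of the mirror image). -/
def revPreorder : BT α → List α
  | leaf => []
  | node l v r => v :: (revPreorder r ++ revPreorder l)

/-- Standard leaf insertion into a binary search tree. -/
def insertKey : BT α → α → BT α
  | leaf, x => node leaf x leaf
  | node l v r, x =>
    if x < v then node (insertKey l x) v r
    else if v < x then node l v (insertKey r x)
    else node l v r

/-- The depth (number of edges from the root) of the node with key `x`,
located by binary search. -/
def depthOf : BT α → α → ℕ
  | leaf, _ => 0
  | node l v r, x =>
    if x < v then depthOf l x + 1
    else if v < x then depthOf r x + 1
    else 0

/-- The search path to the key `x`: `false` records a step to a left child,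
`true` a step to a right child. -/
def pathTo : BT α → α → List Bool
  | leaf, _ => []
  | node l v r, x =>
    if x < v then false :: pathTo l x
    else if v < x then true :: pathTo r x
    else []

/-- The left-depth of the node with key `x`: the number of left-child edges
on the path from the root to it. -/
def leftDepthKey : BT α → α → ℕ
  | leaf, _ => 0
  | node l v r, x =>
    if x < v then leftDepthKey l x + 1
    else if v < x then leftDepthKey r x
    else 0

/-- The subtree rooted at the node with key `x` (empty if `x` is absent). -/
def subtreeAt : BT α → α → BT α
  | leaf, _ => leaf
  | node l v r, x =>
    if x < v then subtreeAt l x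
    else if v < x then subtreeAt r x
    else node l v r

/-- The key at the root, if any. -/
def rootKey : BT α → Option α
  | leaf => none
  | node _ v _ => some v

/-- The key of the parent of the node with key `x`, if any. -/
def parentKey : BT α → α → Option α
  | leaf, _ => none
  | node l v r, x =>
    if x < v then (if l.rootKey = some x then some v else l.parentKey x)
    else if v < x then (if r.rootKey = some x then some v else r.parentKey x)
    else none

/-- A step of the context (zipper) describing the search path from the root
to the current subtree: `inL v r` means the current subtree is the left child
of a node with key `v` and right subtree `r`; `inR l v` means it is the right
child of a node with key `v` and left subtree `l`. -/
inductive Ctx (α : Type) where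
  | inL : α → BT α → Ctx α
  | inR : BT α → α → Ctx α

/-- Descend along the search path for `x`, recording the context.
The head of the returned list corresponds to the immediate parent. -/
def descend : BT α → α → List (Ctx α) → List (Ctx α) × BT α
  | leaf, _, acc => (acc, leaf)
  | node l v r, x, acc =>
    if x < v then descend l x (Ctx.inL v r :: acc)
    else if v < x then descend r x (Ctx.inR l v :: acc)
    else (acc, node l v r)

/-- Reattach a subtree into its context, with no rotations. -/
def rebuild : BT α → List (Ctx α) → BT α
  | t, [] => t
  | t, Ctx.inL v r :: cs => rebuild (node t v r) cs
  | t, Ctx.inR l v :: cs => rebuild (node l v t) cs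

/-- Bottom-up splay steps: repeatedly apply zig / zig-zig / zig-zag steps to
the current subtree (rooted at the node being splayed) until the context is
exhausted. -/
def splayLoop : BT α → List (Ctx α) → BT α
  | t, [] => t
  | node a x b, [Ctx.inL v r] => node a x (node b v r)          -- zig
  | node a x b, [Ctx.inR l v] => node (node l v a) x b          -- zig
  | node a x b, Ctx.inL p pr :: Ctx.inL g gr :: cs =>           -- zig-zig
      splayLoop (node a x (node b p (node pr g gr))) cs
  | node a x b, Ctx.inL p pr :: Ctx.inR gl g :: cs =>           -- zig-zag
      splayLoop (node (node gl g a) x (node b p pr)) cs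
  | node a x b, Ctx.inR pl p :: Ctx.inR gl g :: cs =>           -- zig-zig
      splayLoop (node (node (node gl g pl) p a) x b) cs
  | node a x b, Ctx.inR pl p :: Ctx.inL g gr :: cs =>           -- zig-zag
      splayLoop (node (node pl p a) x (node b g gr)) cs
  | leaf, cs => rebuild leaf cs   -- unreachable when the splayed key is present

/-- Splaying the key `x`: if `x` occurs in the tree, bring its node to the
root by bottom-up splay steps; otherwise leave the tree unchanged. -/
def splay (x : α) (t : BT α) : BT α :=
  match descend t x [] with
  | (_, leaf) => t
  | (cs, found) => splayLoop found cs

/-- `α`-weight-balance in the sense of Nievergelt–Reingold: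
at each node, `min(|L|,|R|) + 1 ≥ α * (|x| + 1)`. -/
def WeightBalanced (a : ℝ) : BT α → Prop
  | leaf => True
  | node l _ r =>
      (min l.size r.size + 1 : ℝ) ≥ a * ((l.size + r.size + 1 : ℕ) + 1 : ℝ) ∧
      WeightBalanced a l ∧ WeightBalanced a r

/-- The rank of `x` in `t`: the number of keys of `t` that are `≤ x`. -/
def rank (t : BT α) (x : α) : ℕ := (t.keys.filter (fun y => y ≤ x)).length

end BT

section Defs

variable {α : Type} [LinearOrder α]

/-- The insertion tree of a sequence: leaf-insert the keys in order. -/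
def bstOf (π : List α) : BT α := π.foldl BT.insertKey BT.leaf

/-- `q` is a sub-root: a node of `t` not yet touched whose parent is touched,
where `touched` is the list of touched keys. -/
def IsSubRoot (t : BT α) (touched : List α) (q : α) : Prop :=
  q ∈ t.keys ∧ q ∉ touched ∧ ∃ p, t.parentKey q = some p ∧ p ∈ touched

/-- π avoids the pattern (2,3,1). -/
def Avoids231 (π : List α) : Prop :=
  ¬ ∃ i j k : Fin π.length, i < j ∧ j < k ∧ π.get k < π.get i ∧ π.get i < π.get j

/-- π avoids the pattern (3,1,2). -/
def Avoids312 (π : List α) : Prop :=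
  ¬ ∃ i j k : Fin π.length, i < j ∧ j < k ∧ π.get j < π.get k ∧ π.get k < π.get i

/-- π avoids the pattern (2,1,3). -/
def Avoids213 (π : List α) : Prop :=
  ¬ ∃ i j k : Fin π.length, i < j ∧ j < k ∧ π.get j < π.get i ∧ π.get i < π.get k

/-- π contains a strictly decreasing subsequence of length `k`. -/
def HasDecreasingSubseq (π : List α) (k : ℕ) : Prop :=
  ∃ s : List α, s.Sublist π ∧ s.length = k ∧ s.Chain' (· > ·)

/-- Splay the keys of a list in order, starting from `t`. -/
def splaySeq (π : List α) (t : BT α) : BT α := π.foldl (fun s x => BT.splay x s) t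

/-- The cost of splaying a sequence of keys starting from `t`:
each splay costs the current depth of the requested key plus one. -/
def splayCost : BT α → List α → ℕ
  | _, [] => 0
  | t, x :: xs => (t.depthOf x + 1) + splayCost (BT.splay x t) xs

/-- The cost of insertion splaying a sequence of keys starting from `t`:
each key is leaf-inserted, then the new node is splayed, at a cost of
its depth after insertion plus one. -/
def insertSplayCost : BT α → List α → ℕ
  | _, [] => 0
  | t, x :: xs =>
    ((t.insertKey x).depthOf x + 1) + insertSplayCost (BT.splay x (t.insertKey x)) xs

/-- `DF rk xs` = Σ_{i≥2} log₂(|rk(x_i) − rk(x_{i−1})| + 1). -/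
noncomputable def DF (rk : α → ℕ) (xs : List α) : ℝ :=
  ((xs.zip xs.tail).map
    (fun p => Real.logb 2 (|(rk p.2 : ℝ) - (rk p.1 : ℝ)| + 1))).sum

/-- The rank of `x` within the sequence `σ` itself. -/
def rankIn (σ : List α) (x : α) : ℕ := (σ.filter (fun y => y ≤ x)).length

/-- The dynamic-finger sum of a sequence, with ranks computed in the
sequence itself. -/
noncomputable def DFseq (σ : List α) : ℝ := DF (rankIn σ) σ

end Defs

/-!
Call the keys on the path from the root that always goes to the right child the right spine.
Because the sequence avoids 231, every key already inserted that exceeds some key still to come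
lies on the right spine. Hence a new key `x` is reached by walking down the right spine to its
first key `u > x`, stepping left once, and walking down the right spine of the left subtree of
`u`. Splaying `x` along such a path pairs the right-going steps into zig-zigs, which fold each
walk into a left subtree of `x` whose right spine is half as long, and leaves `u`, with its right
subtree, as the right child of `x`. With the potential that charges every right-spine node
`3 + 2 k + [its left subtree is nonempty]`, where `k` is the length of the right spine of its
left subtree, every insertion has amortized cost at most `6`.
-/

theorem Avoids231.not_sublist {α : Type} [LinearOrder α] {π : List α} (h : Avoids231 π)
    {a b c : α} (hs : [b, c, a].Sublist π) (hab : a < b) (hbc : b < c) : False := by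
  obtain ⟨f, hf⟩ := List.sublist_iff_exists_fin_orderEmbedding_get_eq.1 hs
  refine h ⟨f 0, f 1, f 2, f.strictMono (by simp), f.strictMono (by simp [Fin.lt_def]), ?_, ?_⟩
  · rw [← hf 2, ← hf 0]; exact hab
  · rw [← hf 0, ← hf 1]; exact hbc

namespace BT

section Splaying

variable {α : Type}

def splayLeft : BT α → List (Ctx α) → BT α
  | t, [] => t
  | t, [.inL _ _] => t
  | t, [.inR l v] => node l v t
  | t, .inL _ _ :: .inL _ _ :: cs => splayLeft t cs
  | t, .inL _ _ :: .inR gl g :: cs => splayLeft (node gl g t) cs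
  | t, .inR pl p :: .inR gl g :: cs => splayLeft (node (node gl g pl) p t) cs
  | t, .inR pl p :: .inL _ _ :: cs => splayLeft (node pl p t) cs

def splayRight : BT α → List (Ctx α) → BT α
  | t, [] => t
  | t, [.inL v r] => node t v r
  | t, [.inR _ _] => t
  | t, .inL p pr :: .inL g gr :: cs => splayRight (node t p (node pr g gr)) cs
  | t, .inL p pr :: .inR _ _ :: cs => splayRight (node t p pr) cs
  | t, .inR _ _ :: .inR _ _ :: cs => splayRight t cs
  | t, .inR _ _ :: .inL g gr :: cs => splayRight (node t g gr) cs

theorem splayLoop_node : ∀ (a : BT α) (x : α) (b : BT α) (cs : List (Ctx α)),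
    splayLoop (node a x b) cs = node (splayLeft a cs) x (splayRight b cs)
  | _, _, _, [] => rfl
  | _, _, _, [.inL _ _] => rfl
  | _, _, _, [.inR _ _] => rfl
  | _, _, _, .inL _ _ :: .inL _ _ :: cs => splayLoop_node _ _ _ cs
  | _, _, _, .inL _ _ :: .inR _ _ :: cs => splayLoop_node _ _ _ cs
  | _, _, _, .inR _ _ :: .inR _ _ :: cs => splayLoop_node _ _ _ cs
  | _, _, _, .inR _ _ :: .inL _ _ :: cs => splayLoop_node _ _ _ cs

theorem rebuild_append (t : BT α) (cs ds : List (Ctx α)) :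
    rebuild t (cs ++ ds) = rebuild (rebuild t cs) ds := by
  induction cs generalizing t with
  | nil => rfl
  | cons c cs ih => cases c <;> exact ih _

theorem keys_rebuild_congr {t t' : BT α} (h : t.keys = t'.keys) (cs : List (Ctx α)) :
    (rebuild t cs).keys = (rebuild t' cs).keys := by
  induction cs generalizing t t' with
  | nil => exact h
  | cons c cs ih => cases c <;> exact ih (by simp [keys, h])

theorem keys_splayLoop_node : ∀ (a : BT α) (x : α) (b : BT α) (cs : List (Ctx α)),
    (node (splayLeft a cs) x (splayRight b cs)).keys = (rebuild (node a x b) cs).keys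
  | _, _, _, [] => rfl
  | _, _, _, [.inL _ _] => by simp [splayLeft, splayRight, rebuild, keys]
  | _, _, _, [.inR _ _] => by simp [splayLeft, splayRight, rebuild, keys]
  | _, _, _, .inL _ _ :: .inL _ _ :: cs =>
    (keys_splayLoop_node _ _ _ cs).trans (keys_rebuild_congr (by simp [keys]) cs)
  | _, _, _, .inL _ _ :: .inR _ _ :: cs =>
    (keys_splayLoop_node _ _ _ cs).trans (keys_rebuild_congr (by simp [keys]) cs)
  | _, _, _, .inR _ _ :: .inR _ _ :: cs =>
    (keys_splayLoop_node _ _ _ cs).trans (keys_rebuild_congr (by simp [keys]) cs)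
  | _, _, _, .inR _ _ :: .inL _ _ :: cs =>
    (keys_splayLoop_node _ _ _ cs).trans (keys_rebuild_congr (by simp [keys]) cs)

-- Listed bottom-up, like the contexts of `descend`: `rebuild m (rightCtx L)` hangs `m` below `L`.
def rightSpine : BT α → List (BT α × α)
  | leaf => []
  | node l v r => rightSpine r ++ [(l, v)]

def rightCtx (L : List (BT α × α)) : List (Ctx α) := L.map fun p => .inR p.1 p.2

@[simp]
theorem length_rightCtx (L : List (BT α × α)) : (rightCtx L).length = L.length :=
  List.length_map _

theorem rightSpine_rebuild_rightCtx (m : BT α) (L : List (BT α × α)) :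
    (rebuild m (rightCtx L)).rightSpine = m.rightSpine ++ L := by
  induction L generalizing m with
  | nil => simp [rightCtx, rebuild]
  | cons p L ih => simp_all [rightCtx, rebuild, rightSpine]

theorem mem_keys_of_mem_rightSpine {t : BT α} {y : α} (hy : y ∈ t.rightSpine.map Prod.snd) :
    y ∈ t.keys := by
  induction t with
  | leaf => simp [rightSpine] at hy
  | node l v r _ ihr =>
    simp only [rightSpine, List.map_append, List.mem_append, List.map_cons, List.map_nil,
      List.mem_singleton] at hy
    rcases hy with hy | rfl <;> simp [keys, *]

theorem splayRight_rightCtx : ∀ (b : BT α) (L : List (BT α × α)),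
    splayRight b (rightCtx L) = b
  | _, [] => rfl
  | _, [_] => rfl
  | b, _ :: _ :: L => splayRight_rightCtx b L

theorem splayRight_rightCtx_inL : ∀ (b : BT α) (L : List (BT α × α)) (u : α) (Ur : BT α)
    (L' : List (BT α × α)), splayRight b (rightCtx L ++ .inL u Ur :: rightCtx L') = node b u Ur
  | _, [], _, _, [] => rfl
  | _, [], _, _, _ :: L' => splayRight_rightCtx _ L'
  | _, [_], _, _, L' => splayRight_rightCtx _ L'
  | b, _ :: _ :: L, u, Ur, L' => splayRight_rightCtx_inL b L u Ur L'

theorem length_rightSpine_splayLeft_rightCtx : ∀ (t : BT α) (L : List (BT α × α)),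
    (splayLeft t (rightCtx L)).rightSpine.length = t.rightSpine.length + (L.length + 1) / 2
  | _, [] => by simp [rightCtx, splayLeft]
  | _, [_] => by simp [rightCtx, splayLeft, rightSpine]
  | _, _ :: _ :: L =>
    (length_rightSpine_splayLeft_rightCtx _ L).trans (by simp [rightSpine]; omega)

theorem length_rightSpine_splayLeft_rightCtx_inL_le : ∀ (t : BT α) (L : List (BT α × α))
    (u : α) (Ur : BT α) (L' : List (BT α × α)),
    (splayLeft t (rightCtx L ++ .inL u Ur :: rightCtx L')).rightSpine.length ≤
      t.rightSpine.length + (L.length + 1) / 2 + L'.length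
  | _, [], _, _, [] => by simp [rightCtx, splayLeft]
  | _, [], _, _, _ :: L' =>
    (length_rightSpine_splayLeft_rightCtx _ L').trans_le (by simp [rightSpine]; omega)
  | _, [_], _, _, L' =>
    (length_rightSpine_splayLeft_rightCtx _ L').trans_le (by simp [rightSpine]; omega)
  | _, _ :: _ :: L, u, Ur, L' =>
    (length_rightSpine_splayLeft_rightCtx_inL_le _ L u Ur L').trans (by simp [rightSpine]; omega)

end Splaying

variable {α : Type} [LinearOrder α]

def insertCtx : BT α → α → List (Ctx α)
  | leaf, _ => []
  | node l v r, x =>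
    if x < v then insertCtx l x ++ [.inL v r]
    else if v < x then insertCtx r x ++ [.inR l v]
    else []

theorem insertKey_eq_rebuild {x : α} {t : BT α} (hx : x ∉ t.keys) :
    t.insertKey x = rebuild (node leaf x leaf) (t.insertCtx x) := by
  induction t with
  | leaf => rfl
  | node l v r ihl ihr =>
    simp only [keys, List.mem_append, List.mem_cons, not_or] at hx
    rcases lt_trichotomy x v with h | rfl | h
    · simp [insertKey, insertCtx, h, rebuild_append, ihl hx.1, rebuild]
    · exact absurd rfl hx.2.1
    · simp [insertKey, insertCtx, h, h.not_gt, rebuild_append, ihr hx.2.2, rebuild]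

theorem descend_insertKey {x : α} {t : BT α} (hx : x ∉ t.keys) (acc : List (Ctx α)) :
    (t.insertKey x).descend x acc = (t.insertCtx x ++ acc, node leaf x leaf) := by
  induction t generalizing acc with
  | leaf => simp [insertKey, insertCtx, descend]
  | node l v r ihl ihr =>
    simp only [keys, List.mem_append, List.mem_cons, not_or] at hx
    rcases lt_trichotomy x v with h | rfl | h
    · simp [insertKey, insertCtx, descend, h, ihl hx.1]
    · exact absurd rfl hx.2.1
    · simp [insertKey, insertCtx, descend, h, h.not_gt, ihr hx.2.2]

theorem depthOf_insertKey {x : α} {t : BT α} (hx : x ∉ t.keys) :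
    (t.insertKey x).depthOf x = (t.insertCtx x).length := by
  induction t with
  | leaf => simp [insertKey, insertCtx, depthOf]
  | node l v r ihl ihr =>
    simp only [keys, List.mem_append, List.mem_cons, not_or] at hx
    rcases lt_trichotomy x v with h | rfl | h
    · simp [insertKey, insertCtx, depthOf, h, ihl hx.1]
    · exact absurd rfl hx.2.1
    · simp [insertKey, insertCtx, depthOf, h, h.not_gt, ihr hx.2.2]

theorem splay_insertKey {x : α} {t : BT α} (hx : x ∉ t.keys) :
    splay x (t.insertKey x) =
      node (splayLeft leaf (t.insertCtx x)) x (splayRight leaf (t.insertCtx x)) := by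
  rw [splay, descend_insertKey hx, List.append_nil]
  exact splayLoop_node ..

theorem keys_splay_insertKey {x : α} {t : BT α} (hx : x ∉ t.keys) :
    (splay x (t.insertKey x)).keys.Perm (x :: t.keys) := by
  rw [splay_insertKey hx, keys_splayLoop_node, ← insertKey_eq_rebuild hx]
  induction t with
  | leaf => rfl
  | node l v r ihl ihr =>
    simp only [keys, List.mem_append, List.mem_cons, not_or] at hx
    rcases lt_trichotomy x v with h | rfl | h
    · simpa [insertKey, keys, h] using (ihl hx.1).append_right _
    · exact absurd rfl hx.2.1
    · simp only [insertKey, keys, h, h.not_gt, if_false, if_true]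
      refine ((ihr hx.2.2).cons v |>.append_left _).trans ?_
      simpa using List.perm_middle (a := x) (l₁ := l.keys ++ [v]) (l₂ := r.keys)

theorem insertCtx_rebuild_rightCtx {x : α} (m : BT α) {L : List (BT α × α)}
    (hL : ∀ p ∈ L, p.2 < x) :
    (rebuild m (rightCtx L)).insertCtx x = m.insertCtx x ++ rightCtx L := by
  induction L generalizing m with
  | nil => simp [rightCtx, rebuild]
  | cons p L ih =>
    have hp := hL p List.mem_cons_self
    have := ih (node p.1 p.2 m) fun q hq => hL q (List.mem_cons_of_mem _ hq)
    simp_all [rightCtx, rebuild, insertCtx, hp.not_gt]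

theorem insertCtx_of_forall_lt {x : α} {t : BT α} (ht : ∀ y ∈ t.keys, y < x) :
    t.insertCtx x = rightCtx t.rightSpine := by
  induction t with
  | leaf => rfl
  | node l v r _ ihr =>
    have hv : v < x := ht v (by simp [keys])
    simp [insertCtx, hv, hv.not_gt, rightSpine, rightCtx,
      ihr fun y hy => ht y (by simp [keys, hy])]

def spineWeight (p : BT α × α) : ℕ :=
  3 + (if p.1 = leaf then 0 else 1) + 2 * p.1.rightSpine.length

theorem spineWeight_le (p : BT α × α) : spineWeight p ≤ 4 + 2 * p.1.rightSpine.length := by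
  unfold spineWeight; split <;> omega

@[simp]
theorem spineWeight_leaf (v : α) : spineWeight (leaf, v) = 3 := by
  simp [spineWeight, rightSpine]

theorem spineWeight_of_ne_leaf {l : BT α} (hl : l ≠ leaf) (v : α) :
    spineWeight (l, v) = 4 + 2 * l.rightSpine.length := by
  simp [spineWeight, hl]

def potential (t : BT α) : ℕ := (t.rightSpine.map spineWeight).sum

@[simp]
theorem potential_leaf : (leaf : BT α).potential = 0 := rfl

theorem potential_node (l : BT α) (v : α) (r : BT α) :
    (node l v r).potential = r.potential + spineWeight (l, v) := by
  simp [potential, rightSpine]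

theorem potential_rebuild_rightCtx (m : BT α) (L : List (BT α × α)) :
    (rebuild m (rightCtx L)).potential = m.potential + (L.map spineWeight).sum := by
  simp [potential, rightSpine_rebuild_rightCtx]

theorem three_mul_length_le_sum_spineWeight (L : List (BT α × α)) :
    3 * L.length ≤ (L.map spineWeight).sum := by
  induction L with
  | nil => simp
  | cons p L ih => simp only [List.length_cons, List.map_cons, List.sum_cons, spineWeight]; omega

theorem exists_eq_rebuild_rightCtx {x : α} {t : BT α} (hnd : t.keys.Nodup) (hx : x ∉ t.keys)
    (hspine : ∀ y ∈ t.keys, x < y → y ∈ t.rightSpine.map Prod.snd) :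
    ∃ m low, t = rebuild m (rightCtx low) ∧ (∀ p ∈ low, p.2 < x) ∧
      (m = leaf ∨ ∃ l u Ur, m = node l u Ur ∧ x < u ∧ ∀ y ∈ l.keys, y < x) := by
  induction t with
  | leaf => exact ⟨leaf, [], rfl, by simp, Or.inl rfl⟩
  | node l v r _ ihr =>
    simp only [keys, List.mem_append, List.mem_cons, not_or] at hx
    rw [keys] at hnd
    have hdisj : ∀ y ∈ l.keys, y ∉ v :: r.keys := fun _ hy =>
      List.disjoint_of_nodup_append hnd hy
    simp only [rightSpine, List.map_append, List.mem_append, List.map_cons, List.map_nil,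
      List.mem_singleton] at hspine
    rcases lt_trichotomy x v with h | rfl | h
    · refine ⟨node l v r, [], rfl, by simp, Or.inr ⟨l, v, r, rfl, h, fun y hy => ?_⟩⟩
      refine lt_of_not_ge fun hxy => ?_
      rcases hspine y (by simp [keys, hy]) (lt_of_le_of_ne hxy (ne_of_mem_of_not_mem hy hx.1).symm)
        with hr | rfl
      · exact hdisj y hy (List.mem_cons_of_mem _ (mem_keys_of_mem_rightSpine hr))
      · exact hdisj y hy List.mem_cons_self
    · exact absurd rfl hx.2.1
    · obtain ⟨m, low, rfl, hlow, hm⟩ := ihr (List.nodup_append.1 hnd).2.1.of_cons hx.2.2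
        fun y hy hxy => (hspine y (by simp [keys, hy]) hxy).resolve_right (h.trans hxy).ne'
      refine ⟨m, low ++ [(l, v)], ?_, ?_, hm⟩
      · simp [rightCtx, rebuild_append, rebuild]
      · simpa [or_imp, forall_and] using And.intro hlow h

theorem splay_insertKey_amortized {x : α} {t : BT α} (hnd : t.keys.Nodup) (hx : x ∉ t.keys)
    (hspine : ∀ y ∈ t.keys, x < y → y ∈ t.rightSpine.map Prod.snd) :
    ∃ A B, splay x (t.insertKey x) = node A x B ∧
      (t.insertKey x).depthOf x + 1 + (node A x B).potential ≤ 6 + t.potential ∧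
      ∀ y ∈ t.rightSpine.map Prod.snd, x < y → y ∈ B.rightSpine.map Prod.snd := by
  obtain ⟨m, low, rfl, hlow, hm⟩ := exists_eq_rebuild_rightCtx hnd hx hspine
  refine ⟨_, _, splay_insertKey hx, ?_⟩
  have hlow3 := three_mul_length_le_sum_spineWeight low
  have hxlow : ∀ y ∈ low.map Prod.snd, ¬ x < y := by
    simpa using fun y l hy => (hlow (l, y) hy).not_gt
  rw [depthOf_insertKey hx, potential_rebuild_rightCtx, rightSpine_rebuild_rightCtx,
    insertCtx_rebuild_rightCtx _ hlow]
  rcases hm with rfl | ⟨l, u, Ur, rfl, hxu, hl⟩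
  · have hA := length_rightSpine_splayLeft_rightCtx leaf low
    have hw := spineWeight_le (splayLeft leaf (rightCtx low), x)
    simp only [insertCtx, List.nil_append, splayRight_rightCtx] at hA hw ⊢
    refine ⟨?_, fun y hy hxy => absurd hxy (hxlow y (by simpa [rightSpine] using hy))⟩
    simp only [potential_node, potential_leaf, length_rightCtx, hA, rightSpine,
      List.length_nil] at hw ⊢
    omega
  · have hA := length_rightSpine_splayLeft_rightCtx_inL_le leaf l.rightSpine u Ur low
    have hctx : (node l u Ur).insertCtx x ++ rightCtx low =
        rightCtx l.rightSpine ++ .inL u Ur :: rightCtx low := by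
      simp [insertCtx, hxu, insertCtx_of_forall_lt hl]
    rw [hctx, splayRight_rightCtx_inL]
    have hw := spineWeight_le
      (splayLeft leaf (rightCtx l.rightSpine ++ .inL u Ur :: rightCtx low), x)
    refine ⟨?_, fun y hy hxy => ?_⟩
    · simp only [potential_node, List.length_append, List.length_cons, length_rightCtx,
        spineWeight_leaf, rightSpine, List.length_nil] at hA hw ⊢
      rcases eq_or_ne l leaf with rfl | hl0
      · simp only [rightSpine, List.length_nil, spineWeight_leaf] at hA hw ⊢
        omega
      · rw [spineWeight_of_ne_leaf hl0]
        omega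
    · simp only [rightSpine, List.map_append, List.mem_append] at hy ⊢
      rcases hy with (hy | hy) | hy
      · exact Or.inl hy
      · exact Or.inr (by simpa using hy)
      · exact absurd hxy (hxlow y hy)

theorem insertSplayCost_le_of_avoids231 (pre xs : List α) (t : BT α) (hkeys : t.keys.Perm pre)
    (hnd : (pre ++ xs).Nodup) (hav : Avoids231 (pre ++ xs))
    (hspine : ∀ y ∈ t.keys, ∀ x ∈ xs, x < y → y ∈ t.rightSpine.map Prod.snd) :
    insertSplayCost t xs ≤ 6 * xs.length + t.potential := by
  induction xs generalizing pre t with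
  | nil => simp [insertSplayCost]
  | cons x xs ih =>
    have hx : x ∉ t.keys := fun h => List.disjoint_of_nodup_append hnd (hkeys.subset h)
      List.mem_cons_self
    obtain ⟨A, B, hsplay, hcost, hB⟩ := splay_insertKey_amortized
      (hkeys.nodup_iff.2 (List.nodup_append.1 hnd).1) hx
      fun y hy => hspine y hy x List.mem_cons_self
    have hkeys' : (node A x B).keys.Perm (pre ++ [x]) := by
      rw [← hsplay]
      exact (keys_splay_insertKey hx).trans
        ((hkeys.cons x).trans (List.perm_append_singleton x pre).symm)
    have hrest := ih (pre ++ [x]) (node A x B) hkeys' (by simpa using hnd) (by simpa using hav)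
      fun y hy x' hx' hx'y => by
        rcases List.mem_append.1 (hkeys'.mem_iff.1 hy) with hy | hy
        · have hyt := hkeys.mem_iff.2 hy
          -- otherwise `y, x, x'` is a 231 pattern
          have hxy : x < y := (ne_of_mem_of_not_mem hyt hx).lt_or_gt.resolve_left fun hyx =>
            hav.not_sublist ((List.singleton_sublist.2 hy).append
              ((List.singleton_sublist.2 hx').cons_cons x)) hx'y hyx
          have hyB := hB y (hspine y hyt x' (List.mem_cons_of_mem _ hx') hx'y) hxy
          simp [rightSpine, hyB]
        · simp_all [rightSpine]
    simp only [insertSplayCost, hsplay, List.length_cons]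
    omega

end BT

/-- Insertion splaying a (2,3,1)-avoiding sequence of `n` distinct keys,
starting from the empty tree, costs at most `6n`. -/
theorem insertSplay_preorder_linear {α : Type} [LinearOrder α]
    (π : List α) (hnd : π.Nodup) (hav : Avoids231 π) :
    insertSplayCost BT.leaf π ≤ 6 * π.length := by
  simpa using
    BT.insertSplayCost_le_of_avoids231 [] π .leaf (.refl _) hnd hav (by simp [BT.keys])
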